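/- Let A and B be max-plus automata over the same finite alphabet Σ with A deterministic and f_B(v) ∈ ℕ for all words v. For every element (p,x,q,M) of the semigroup of asymptotic behaviours I_{A,B} and every s ∈ ℕ, there exist a word w_s ∈ Σ* and x_s ∈ ℕ such that: (1) A has a run from p to q labelled by w_s of weight x_s, and bar(x) = bar(x_s); (2) bar(M_B(w_s)) = bar(M); (3) if x = ∞, then for all indices i, j with M_{i,j} ≤ 1, one has x_s ≥ s·(M_B(w_s))_{i,j} + s. -/

import Mathlib

open scoped Classical

/-! ### Max-plus automata -/

/-- A max-plus automaton over alphabet `Sigma` with states `Q`: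
a transition matrix for each letter, an initial row vector and a final column vector,
all with entries in `ℕmax = ℕ ∪ {-∞}`, represented as `WithBot ℕ`. -/
structure MPA (Sigma : Type) (Q : Type) where
  M : Sigma → Q → Q → WithBot ℕ
  I : Q → WithBot ℕ
  F : Q → WithBot ℕ

namespace MPA

variable {Sigma Q : Type}

/-- The matrix of a word, i.e. the product `M(w₁) ⊗ ⋯ ⊗ M(w_k)` over the
max-plus semiring. -/
def mword [Fintype Q] [DecidableEq Q] (A : MPA Sigma Q) : List Sigma → Q → Q → WithBot ℕ
  | [] => fun p q => if p = q then ((0 : ℕ) : WithBot ℕ) else ⊥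
  | a :: w => fun p q => Finset.univ.sup fun r => A.M a p r + A.mword w r q

/-- The weighting function computed by a max-plus automaton:
`f_A(w) = I ⊗ M(w) ⊗ F`. -/
def func [Fintype Q] [DecidableEq Q] (A : MPA Sigma Q) (w : List Sigma) : WithBot ℕ :=
  Finset.univ.sup fun p => Finset.univ.sup fun q => A.I p + A.mword w p q + A.F q

/-- `A` is deterministic: at most one non-`-∞` entry in `I`,
and at most one non-`-∞` entry in each row of each `M(a)`. -/
def Deterministic (A : MPA Sigma Q) : Prop :=
  (∀ p q, A.I p ≠ ⊥ → A.I q ≠ ⊥ → p = q) ∧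
    ∀ a p q r, A.M a p q ≠ ⊥ → A.M a p r ≠ ⊥ → q = r

end MPA

/-- `A` is big-O of `B`: there is `c ≥ 1` with `f_A(w) ≤ c·f_B(w) + c` for all `w`. -/
def BigO {Sigma Q1 Q2 : Type} [Fintype Q1] [DecidableEq Q1] [Fintype Q2] [DecidableEq Q2]
    (A : MPA Sigma Q1) (B : MPA Sigma Q2) : Prop :=
  ∃ c : ℕ, 1 ≤ c ∧ ∀ w : List Sigma, A.func w ≤ c • B.func w + (c : WithBot ℕ)

/-! ### The semiring Ω = {-∞, 0, 1, ∞} -/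

/-- The four-element semiring `Ω = ({-∞,0,1,∞}, max, +)`. -/
inductive OSR : Type
  | bot | zero | one | inf
  deriving DecidableEq

namespace OSR

def rank : OSR → ℕ
  | bot => 0 | zero => 1 | one => 2 | inf => 3

instance : LE OSR := ⟨fun a b => a.rank ≤ b.rank⟩
instance : LT OSR := ⟨fun a b => a.rank < b.rank⟩

/-- The max operation of `Ω`, given by the order `-∞ < 0 < 1 < ∞`. -/
def sup (a b : OSR) : OSR := if a.rank ≤ b.rank then b else a

/-- The sum operation of `Ω`. -/
def add : OSR → OSR → OSR
  | bot, _ => bot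
  | _, bot => bot
  | zero, x => x
  | x, zero => x
  | one, one => one
  | one, inf => inf
  | inf, one => inf
  | inf, inf => inf

/-- Stabilisation on `Ω`. -/
def sharp : OSR → OSR
  | bot => bot | zero => zero | one => inf | inf => inf

/-- Projection into `Ω̄ = {-∞,0,1}`. -/
def bar : OSR → OSR
  | bot => bot | zero => zero | one => one | inf => one

end OSR

/-- Max of a finite family in `Ω`. -/
def osum {n : ℕ} (f : Fin n → OSR) : OSR :=
  (List.finRange n).foldr (fun j acc => OSR.sup (f j) acc) OSR.bot

/-- Product of matrices over `Ω`. -/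
def omul {n : ℕ} (M N : Fin n → Fin n → OSR) : Fin n → Fin n → OSR :=
  fun i k => osum fun j => OSR.add (M i j) (N j k)

/-- Entrywise projection of a matrix into `Ω̄`. -/
def obar {n : ℕ} (M : Fin n → Fin n → OSR) : Fin n → Fin n → OSR :=
  fun i j => (M i j).bar

/-- Projection of `ℕmax` into `Ω̄ ⊆ Ω`: `-∞ ↦ -∞`, `0 ↦ 0`, positive ↦ `1`. -/
def barW (x : WithBot ℕ) : OSR :=
  WithBot.recBotCoe OSR.bot (fun n => if n = 0 then OSR.zero else OSR.one) x

/-- Projection of `ℕ` into `Ω̄`. -/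
def barNat (n : ℕ) : OSR := if n = 0 then OSR.zero else OSR.one

/-! ### The semigroups `I_{Q,i}` and their operations -/

/-- A (non-`⊥`) element `(p, x, q, M)` of the semigroup `I_{Q,n}`. -/
structure Elem (QA : Type) (n : ℕ) where
  p : QA
  x : OSR
  q : QA
  M : Fin n → Fin n → OSR

/-- Product of two elements (assuming endpoint compatibility). -/
def eprod {QA : Type} {n : ℕ} (e f : Elem QA n) : Elem QA n :=
  ⟨e.p, e.x.add f.x, f.q, omul e.M f.M⟩

/-- The product in `I_{Q,n}` with `⊥` (`none` is `⊥`). -/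
def omulO {QA : Type} {n : ℕ} [DecidableEq QA] :
    Option (Elem QA n) → Option (Elem QA n) → Option (Elem QA n)
  | some e, some f => if e.q = f.p then some (eprod e f) else none
  | _, _ => none

/-- `(p,x,q,M)` is path-idempotent: `p = q` and `bar(M)` is idempotent. -/
def pathIdem {QA : Type} {n : ℕ} (e : Elem QA n) : Prop :=
  e.p = e.q ∧ omul (obar e.M) (obar e.M) = obar e.M

/-- `M` with all diagonal entries replaced by their stabilisation. -/
def mdiagSharp {n : ℕ} (M : Fin n → Fin n → OSR) : Fin n → Fin n → OSR :=
  fun i j => if i = j then (M i j).sharp else M i j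

/-- Stabilisation of a (path-idempotent) matrix: `M^# = M ⊗ M' ⊗ M`. -/
def mstab {n : ℕ} (M : Fin n → Fin n → OSR) : Fin n → Fin n → OSR :=
  omul (omul M (mdiagSharp M)) M

/-- Stabilisation of a (path-idempotent) element. -/
def estab {QA : Type} {n : ℕ} (e : Elem QA n) : Elem QA n :=
  ⟨e.p, e.x.sharp, e.p, mstab e.M⟩

/-- `⟨N⟩`: all off-diagonal entries replaced by their bar. -/
def mangle {n : ℕ} (M : Fin n → Fin n → OSR) : Fin n → Fin n → OSR :=
  fun i j => if i = j then M i j else (M i j).bar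

/-- Flattening of a (path-idempotent) matrix: `M^♭ = bar(M) ⊗ ⟨M³⟩ ⊗ bar(M)`. -/
def mflat {n : ℕ} (M : Fin n → Fin n → OSR) : Fin n → Fin n → OSR :=
  omul (obar M) (omul (mangle (omul M (omul M M))) (obar M))

/-- Flattening of a (path-idempotent) element. -/
def eflat {QA : Type} {n : ℕ} (e : Elem QA n) : Elem QA n :=
  ⟨e.p, e.x, e.p, mflat e.M⟩

/-- Componentwise projection of an element to `Ω̄`. -/
def ebar {QA : Type} {n : ℕ} (e : Elem QA n) : Elem QA n :=
  ⟨e.p, e.x.bar, e.q, obar e.M⟩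

/-! ### Semigroup of paths and of asymptotic behaviours -/

/-- Generators: `(p, bar x, q, bar (M_B(a)))` for each transition `p →^{a:x} q` of `A`
with `x ≠ -∞`. -/
def IsGen {Sigma QA : Type} {nB : ℕ} (A : MPA Sigma QA) (B : MPA Sigma (Fin nB))
    (e : Elem QA nB) : Prop :=
  ∃ (a : Sigma) (p q : QA) (x : ℕ), A.M a p q = ((x : ℕ) : WithBot ℕ) ∧
    e = ⟨p, barNat x, q, fun i j => barW (B.M a i j)⟩

/-- The semigroup of paths `S̄_{A,B}` (as a subset of `Ī_{Q_A,|Q_B|}`, including `⊥`):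
generated by the generators under the product. -/
inductive InPathsO {Sigma QA : Type} {nB : ℕ} [DecidableEq QA]
    (A : MPA Sigma QA) (B : MPA Sigma (Fin nB)) : Option (Elem QA nB) → Prop
  | gen : ∀ e, IsGen A B e → InPathsO A B (some e)
  | mul : ∀ x y, InPathsO A B x → InPathsO A B y → InPathsO A B (omulO x y)

/-- The semigroup of asymptotic behaviours `I_{A,B}`: generated by the generators and
closed under product, stabilisation and flattening. -/
inductive InAsympO {Sigma QA : Type} {nB : ℕ} [DecidableEq QA]
    (A : MPA Sigma QA) (B : MPA Sigma (Fin nB)) : Option (Elem QA nB) → Prop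
  | gen : ∀ e, IsGen A B e → InAsympO A B (some e)
  | mul : ∀ x y, InAsympO A B x → InAsympO A B y → InAsympO A B (omulO x y)
  | stab : ∀ e, InAsympO A B (some e) → pathIdem e → InAsympO A B (some (estab e))
  | flat : ∀ e, InAsympO A B (some e) → pathIdem e → InAsympO A B (some (eflat e))

/-- The cardinality `|S̄_{A,B}|` of the semigroup of paths. -/
noncomputable def sizeS {Sigma QA : Type} {nB : ℕ} [DecidableEq QA]
    (A : MPA Sigma QA) (B : MPA Sigma (Fin nB)) : ℕ :=
  Set.ncard {x : Option (Elem QA nB) | InPathsO A B x}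

/-- `(p,x,q,M)` is a witness of non-domination: `p` initial in `A`, `q` final in `A`,
`x = ∞` and `bar(I_B) ⊗ M ⊗ bar(F_B) < ∞`. -/
def IsWitness {Sigma QA : Type} {nB : ℕ} (A : MPA Sigma QA) (B : MPA Sigma (Fin nB))
    (e : Elem QA nB) : Prop :=
  A.I e.p ≠ ⊥ ∧ A.F e.q ≠ ⊥ ∧ e.x = OSR.inf ∧
    osum (fun i => osum fun j =>
      OSR.add (barW (B.I i)) (OSR.add (e.M i j) (barW (B.F j)))) ≠ OSR.inf

/-! ### Tractable witnesses -/

/-- Membership of an extended element (`none` is the adjoined identity `𝟙`) in `S̄_{A,B}`. -/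
def InPathsOpt {Sigma QA : Type} {nB : ℕ} [DecidableEq QA]
    (A : MPA Sigma QA) (B : MPA Sigma (Fin nB)) : Option (Elem QA nB) → Prop
  | none => True
  | some e => InPathsO A B (some e)

/-- `g ⊗ e ⊗ g'` where `g, g'` may be the adjoined identity `𝟙` (i.e. `none`). -/
def extWrap {QA : Type} {n : ℕ} (g : Option (Elem QA n)) (e : Elem QA n)
    (g' : Option (Elem QA n)) : Elem QA n :=
  match g, g' with
  | none, none => e
  | some a, none => eprod a e
  | none, some b => eprod e b
  | some a, some b => eprod a (eprod e b)

/-- `TractCore A B k e`: `e` has the form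
`(g_1 (⋯ (g_{k-1} (g_k)^# g'_{k-1})^♭ ⋯)^♭ g'_1)^♭` with `k` flattenings, built from
elements of `S̄_{A,B} ∪ {𝟙}`. -/
inductive TractCore {Sigma QA : Type} {nB : ℕ} [DecidableEq QA]
    (A : MPA Sigma QA) (B : MPA Sigma (Fin nB)) : ℕ → Elem QA nB → Prop
  | base : ∀ e, InPathsO A B (some e) → pathIdem e → TractCore A B 0 (estab e)
  | step : ∀ k e g g', TractCore A B k e →
      InPathsOpt A B g → InPathsOpt A B g' →
      (∀ a, g = some a → a.q = e.p) → (∀ b, g' = some b → e.q = b.p) →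
      pathIdem (extWrap g e g') →
      TractCore A B (k + 1) (eflat (extWrap g e g'))

/-- A tractable witness of non-domination. -/
def IsTractableWitness {Sigma QA : Type} {nB : ℕ} [DecidableEq QA]
    (A : MPA Sigma QA) (B : MPA Sigma (Fin nB)) (wit : Elem QA nB) : Prop :=
  IsWitness A B wit ∧
    ∃ (m : ℕ) (e : Elem QA nB) (g g' : Option (Elem QA nB)),
      m + 1 ≤ 3 * sizeS A B ∧
      TractCore A B m e ∧ InPathsOpt A B g ∧ InPathsOpt A B g' ∧
      (∀ a, g = some a → a.q = e.p) ∧ (∀ b, g' = some b → e.q = b.p) ∧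
      wit = extWrap g e g'

/-! ### Factorisation trees -/

/-- Finite ordered trees labelled by elements of `Ī_{Q_A,|Q_B|}`. -/
inductive FT (QA : Type) (n : ℕ) : Type
  | leaf : Elem QA n → FT QA n
  | node : Elem QA n → List (FT QA n) → FT QA n

namespace FT

variable {QA : Type} {n : ℕ}

/-- The label of the root of a tree. -/
def label : FT QA n → Elem QA n
  | leaf e => e
  | node e _ => e

mutual
  /-- The list of leaf labels of a tree, in order. -/
  def leaves : FT QA n → List (Elem QA n)
    | .leaf e => [e]
    | .node _ cs => leavesList cs
  def leavesList : List (FT QA n) → List (Elem QA n)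
    | [] => []
    | t :: ts => leaves t ++ leavesList ts
end

mutual
  /-- Height of a tree: leaves have height `0`. -/
  def height : FT QA n → ℕ
    | .leaf _ => 0
    | .node _ cs => heightList cs + 1
  def heightList : List (FT QA n) → ℕ
    | [] => 0
    | t :: ts => max (height t) (heightList ts)
end

/-- The `i`-th child. -/
def childAt : FT QA n → ℕ → Option (FT QA n)
  | leaf _, _ => none
  | node _ cs, i => cs[i]?

/-- The subtree at a path (a list of child indices from the root). -/
def subtreeAt : FT QA n → List ℕ → Option (FT QA n)
  | t, [] => some t
  | t, i :: rest => (t.childAt i).bind fun c => subtreeAt c rest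

/-- Well-formed factorisation trees: internal nodes have ≥ 2 children, are labelled by the
product of the children's labels (with compatible endpoints), and nodes with ≥ 3 children
are idempotent nodes: all children and the node itself carry one same idempotent label. -/
inductive WF : FT QA n → Prop
  | leaf : ∀ e, WF (FT.leaf e)
  | node : ∀ (lbl : Elem QA n) (cs : List (FT QA n)),
      2 ≤ cs.length →
      (∀ c ∈ cs, WF c) →
      List.Chain' (fun a b => a.q = b.p) (cs.map FT.label) →
      (∀ h t, cs.map FT.label = h :: t → lbl = t.foldl eprod h) →
      (3 ≤ cs.length → lbl.p = lbl.q ∧ eprod lbl lbl = lbl ∧ ∀ c ∈ cs, FT.label c = lbl) →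
      WF (FT.node lbl cs)

end FT

/-- One top-down step of the computation of contributors: from the contributor set `C` of a
node with children `cs`, the contributor set of the `i`-th child. -/
def contribStep {QA : Type} {n : ℕ} (cs : List (FT QA n)) (C : Set (Fin n × Fin n)) (i : ℕ) :
    Set (Fin n × Fin n) :=
  match cs with
  | [c1, c2] =>
      let M := (FT.label c1).M
      let P := (FT.label c2).M
      if i = 0 then
        {il | ∃ j, (il.1, j) ∈ C ∧ P il.2 j ≠ OSR.bot ∧ M il.1 il.2 ≠ OSR.bot}
      else
        {lj | ∃ a, (a, lj.2) ∈ C ∧ M a lj.1 ≠ OSR.bot ∧ P lj.1 lj.2 ≠ OSR.bot}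
  | c :: _ :: _ :: _ =>
      let M := (FT.label c).M
      if i = 0 then
        {il | ∃ j, (il.1, j) ∈ C ∧ M il.2 j ≠ OSR.bot ∧ M il.1 il.2 ≠ OSR.bot}
      else if i = cs.length - 1 then
        {lj | ∃ a, (a, lj.2) ∈ C ∧ M a lj.1 ≠ OSR.bot ∧ M lj.1 lj.2 ≠ OSR.bot}
      else
        {lk | ∃ a b, (a, b) ∈ C ∧ M a lk.1 ≠ OSR.bot ∧ M lk.2 b ≠ OSR.bot ∧
              M lk.1 lk.2 ≠ OSR.bot ∧ M lk.2 lk.1 ≠ OSR.bot}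
  | _ => ∅

/-- Contributor set of the node at path `π`, starting from the set `C` at the root. -/
def contribAt {QA : Type} {n : ℕ} : FT QA n → Set (Fin n × Fin n) → List ℕ → Set (Fin n × Fin n)
  | _, C, [] => C
  | FT.leaf _, _, _ :: _ => ∅
  | FT.node _ cs, C, i :: rest =>
      match cs[i]? with
      | none => ∅
      | some c => contribAt c (contribStep cs C i) rest

/-- The contributor set of the root: pairs `(i,j)` with `i` initial in `B`, `j` final in `B`
and `M_{i,j} ≠ -∞`. -/
def rootContrib {Sigma QA : Type} {n : ℕ} (B : MPA Sigma (Fin n)) (t : FT QA n) :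
    Set (Fin n × Fin n) :=
  {ij | B.I ij.1 ≠ ⊥ ∧ B.F ij.2 ≠ ⊥ ∧ (FT.label t).M ij.1 ij.2 ≠ OSR.bot}

/-- The contributor set of the node at path `π` of the tree `t`. -/
def contributors {Sigma QA : Type} {n : ℕ} (B : MPA Sigma (Fin n)) (t : FT QA n)
    (π : List ℕ) : Set (Fin n × Fin n) :=
  contribAt t (rootContrib B t) π

/-- `PathLeaves A B p w xs ls q`: `ls` is the list `α_w(w₁), …, α_w(w_k)` associated with the
run of `A` on `w` from `p` to `q` with transition weights `xs`. -/
def PathLeaves {Sigma QA : Type} {nB : ℕ} (A : MPA Sigma QA) (B : MPA Sigma (Fin nB)) :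
    QA → List Sigma → List ℕ → List (Elem QA nB) → QA → Prop
  | p, [], [], [], q => p = q
  | p, a :: w, x :: xs, e :: ls, q =>
      e.p = p ∧ A.M a p e.q = ((x : ℕ) : WithBot ℕ) ∧ e.x = barNat x ∧
      (e.M = fun i j => barW (B.M a i j)) ∧ PathLeaves A B e.q w xs ls q
  | _, _, _, _, _ => False

/-- `t` is a factorisation tree on the word `w` (for the accepting run of `A` on `w`). -/
def IsFactTreeOn {Sigma QA : Type} {nB : ℕ} [Fintype QA] [DecidableEq QA]
    (A : MPA Sigma QA) (B : MPA Sigma (Fin nB)) (w : List Sigma) (t : FT QA nB) : Prop :=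
  FT.WF t ∧ ∃ (p q : QA) (xs : List ℕ),
    A.I p ≠ ⊥ ∧ A.F q ≠ ⊥ ∧ PathLeaves A B p w xs (FT.leaves t) q

/-- The node of `t` at path `π` is a fault. -/
def IsFaultAt {Sigma QA : Type} {nB : ℕ} (B : MPA Sigma (Fin nB)) (t : FT QA nB)
    (π : List ℕ) : Prop :=
  ∃ σ i, π = σ ++ [i] ∧
    ∃ lbl cs, FT.subtreeAt t σ = some (FT.node lbl cs) ∧ 3 ≤ cs.length ∧
      0 < i ∧ i < cs.length - 1 ∧
      ∃ c, cs[i]? = some c ∧ (FT.label c).x = OSR.one ∧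
        ∀ ij ∈ contributors B t π, (FT.label c).M ij.1 ij.2 = OSR.zero

/-- Number of leaves strictly to the left of the node at path `π`. -/
def offsetAt {QA : Type} {n : ℕ} : FT QA n → List ℕ → ℕ
  | _, [] => 0
  | FT.leaf _, _ :: _ => 0
  | FT.node _ cs, i :: rest =>
      ((cs.take i).map fun c => (FT.leaves c).length).sum +
        match cs[i]? with
        | none => 0
        | some c => offsetAt c rest

/-- Height of the node at path `π`. -/
def heightAt {QA : Type} {n : ℕ} (t : FT QA n) (π : List ℕ) : ℕ :=
  match FT.subtreeAt t π with
  | some c => FT.height c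
  | none => 0

/-- The β-labelling: `beta t π` is the β-label of the root of `t`, where `π` is the path
from the root of `t` down to the fault `ν₁`. -/
def beta {QA : Type} {n : ℕ} : FT QA n → List ℕ → Elem QA n
  | t, [] => FT.label t
  | FT.leaf e, _ :: _ => e
  | FT.node lbl cs, i :: rest =>
      match cs[i]? with
      | none => lbl
      | some c =>
        match rest with
        | [] => estab (FT.label c)
        | j :: rest' =>
          let inner := beta c (j :: rest')
          if cs.length = 2 then
            (if i = 0 then eprod inner ((cs[1]?.map FT.label).getD lbl)
             else eprod ((cs[0]?.map FT.label).getD lbl) inner)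
          else
            if i = 0 then eprod inner (FT.label c)
            else if i = cs.length - 1 then eprod (FT.label c) inner
            else eflat inner


/-!
Induction along the generation of `I_{A,B}`, producing for every `s` a word `w` and its weight
`x` in `A`. Generators are single letters and products are concatenations. If `(p, x, p, M)` is
realised by `w`, its stabilisation or flattening is realised by a power `w^m`, which has weight
`m·x` in `A` since `A` is deterministic. Call an entry of `M` expensive if it is positive (for `#`)
or `∞` (for `♭`). When `M^#_{ij} ≤ 1` (resp. `M^♭_{ij} ≤ 1`), no expensive entry met between `i`
and `j` lies on a cycle, so a run of `B` on `w^m` from `i` to `j` takes at most `|Q_B|` expensive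
steps and weighs at most `|Q_B|·W + m·V`, where `W` bounds all entries of `M_B(w)` and `V` the
cheap ones. Here `V = 0` for `#`, and `x > s·V` for `♭` by induction, so `m = s·(|Q_B|·W + 1) + 1`
makes `m·x` exceed `s` times that weight plus `s`.
-/

namespace OSR

instance : Fintype OSR :=
  ⟨⟨{.bot, .zero, .one, .inf}, by decide⟩, by intro x; cases x <;> decide⟩

instance : DecidableRel (α := OSR) (· ≤ ·) :=
  fun a b => inferInstanceAs (Decidable (a.rank ≤ b.rank))

instance : PartialOrder OSR where
  le := (· ≤ ·)
  lt := (· < ·)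
  le_refl := by decide
  le_trans := by decide
  le_antisymm := by decide
  lt_iff_le_not_ge := by decide

lemma le_sup_left (a b : OSR) : a ≤ sup a b := by revert a b; decide
lemma le_sup_right (a b : OSR) : b ≤ sup a b := by revert a b; decide
lemma sup_le {a b c : OSR} : a ≤ c → b ≤ c → sup a b ≤ c := by revert a b c; decide
lemma bot_le (a : OSR) : bot ≤ a := by revert a; decide
lemma le_inf (a : OSR) : a ≤ inf := by revert a; decide
lemma bar_sup (a b : OSR) : (sup a b).bar = sup a.bar b.bar := by revert a b; decide
lemma bar_add (a b : OSR) : (add a b).bar = add a.bar b.bar := by revert a b; decide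
lemma bar_bar (a : OSR) : a.bar.bar = a.bar := by revert a; decide
lemma bar_sharp (a : OSR) : a.sharp.bar = a.bar := by revert a; decide
lemma bar_ne_bot {a : OSR} : a.bar ≠ bot ↔ a ≠ bot := by revert a; decide
lemma bar_eq_one_of_sharp_eq_inf {a : OSR} : a.sharp = inf → a.bar = one := by revert a; decide
lemma sharp_eq_inf_of_one_le_bar {a : OSR} : one ≤ a.bar → a.sharp = inf := by revert a; decide
lemma eq_inf_of_not_le_one {a : OSR} : ¬a ≤ one → a = inf := by revert a; decide
lemma add_ne_bot {a b : OSR} : a ≠ bot → b ≠ bot → add a b ≠ bot := by revert a b; decide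
lemma add_bot (a : OSR) : add a bot = bot := by revert a; decide
lemma add_eq_inf {a b : OSR} : add a b = inf → a = inf ∨ b = inf := by revert a b; decide
lemma add_inf {a : OSR} : a ≠ bot → add a inf = inf := by revert a; decide
lemma one_le_add_bar {a b : OSR} : a ≠ bot → a ≠ zero → b ≠ bot → one ≤ add a.bar b.bar := by
  revert a b; decide
lemma inf_add {a : OSR} : a ≠ bot → add inf a = inf := by revert a; decide
lemma le_one_of_add_le_one {a b : OSR} :
    add a b ≤ one → a ≠ bot → b ≠ bot → a ≤ one ∧ b ≤ one := by
  revert a b; decide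

end OSR

section Osum

variable {n : ℕ}

lemma le_osum (f : Fin n → OSR) (i : Fin n) : f i ≤ osum f := by
  unfold osum
  have hi := List.mem_finRange i
  generalize List.finRange n = l at hi ⊢
  induction l with
  | nil => simp at hi
  | cons a l ih =>
    rcases List.mem_cons.1 hi with rfl | hi
    · exact OSR.le_sup_left _ _
    · exact (ih hi).trans (OSR.le_sup_right _ _)

lemma osum_le {f : Fin n → OSR} {c : OSR} (h : ∀ i, f i ≤ c) : osum f ≤ c := by
  unfold osum
  induction List.finRange n with
  | nil => exact OSR.bot_le c
  | cons a l ih => exact OSR.sup_le (h a) ih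

lemma osum_ne_bot {f : Fin n → OSR} {i : Fin n} (h : f i ≠ OSR.bot) : osum f ≠ OSR.bot :=
  fun h' => h (le_antisymm (h' ▸ le_osum f i) (OSR.bot_le _))

lemma osum_eq_inf {f : Fin n → OSR} {i : Fin n} (h : f i = OSR.inf) : osum f = OSR.inf :=
  le_antisymm (OSR.le_inf _) (h ▸ le_osum f i)

lemma bar_osum (f : Fin n → OSR) : (osum f).bar = osum fun i => (f i).bar := by
  unfold osum
  induction List.finRange n with
  | nil => rfl
  | cons a l ih => simp only [List.foldr_cons, OSR.bar_sup, ih]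

end Osum

section Bar

lemma barW_coe (x : ℕ) : barW x = barNat x := rfl

lemma bar_barNat (x : ℕ) : (barNat x).bar = barNat x := by
  unfold barNat; split <;> rfl

lemma bar_barW (a : WithBot ℕ) : (barW a).bar = barW a := by
  induction a with
  | bot => rfl
  | coe x => exact bar_barNat x

lemma barNat_ne_bot (x : ℕ) : barNat x ≠ OSR.bot := by
  unfold barNat; split <;> decide

lemma barNat_ne_inf (x : ℕ) : barNat x ≠ OSR.inf := by
  unfold barNat; split <;> decide

lemma one_le_of_barNat_eq_one {x : ℕ} (h : barNat x = OSR.one) : 1 ≤ x := by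
  unfold barNat at h; split at h
  · cases h
  · omega

lemma barNat_add (x y : ℕ) : barNat (x + y) = OSR.add (barNat x) (barNat y) := by
  unfold barNat
  by_cases hx : x = 0 <;> by_cases hy : y = 0 <;> simp [hx, hy] <;> rfl

lemma barNat_mul {m : ℕ} (hm : 1 ≤ m) (x : ℕ) : barNat (m * x) = barNat x := by
  simp [barNat, show m ≠ 0 by omega]

lemma barW_ne_bot {a : WithBot ℕ} : barW a ≠ OSR.bot ↔ a ≠ ⊥ := by
  induction a with
  | bot => simp [barW]
  | coe x => simpa [← Nat.cast_withBot, barW_coe] using barNat_ne_bot x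

lemma barW_eq_zero {a : WithBot ℕ} (h : barW a = OSR.zero) : a = 0 := by
  induction a with
  | bot => cases h
  | coe x =>
    rw [← Nat.cast_withBot, barW_coe, barNat] at h
    split at h
    · simp_all
    · cases h

lemma barW_add (a b : WithBot ℕ) : barW (a + b) = OSR.add (barW a) (barW b) := by
  induction a with
  | bot => rfl
  | coe x =>
    induction b with
    | bot => exact (OSR.add_bot _).symm
    | coe y => exact barNat_add x y

lemma barW_mono {a b : WithBot ℕ} (h : a ≤ b) : barW a ≤ barW b := by
  induction a with
  | bot => exact OSR.bot_le _
  | coe x =>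
    induction b with
    | bot => simp at h
    | coe y =>
      have hxy : x ≤ y := by exact_mod_cast h
      change barNat x ≤ barNat y
      unfold barNat
      split_ifs <;> first | decide | omega

lemma barW_sup {n : ℕ} (f : Fin n → WithBot ℕ) :
    barW (Finset.univ.sup f) = osum fun i => barW (f i) := by
  refine le_antisymm ?_ (osum_le fun i => barW_mono (Finset.le_sup (Finset.mem_univ i)))
  rcases (Finset.univ : Finset (Fin n)).eq_empty_or_nonempty with h | h
  · rw [h, Finset.sup_empty]
    exact OSR.bot_le _
  · obtain ⟨i, -, hi⟩ := Finset.exists_mem_eq_sup _ h f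
    rw [hi]
    exact le_osum (fun i => barW (f i)) i

end Bar

namespace WithBot

lemma add_finset_sup {ι : Type*} (s : Finset ι) (a : WithBot ℕ) (f : ι → WithBot ℕ) :
    a + s.sup f = s.sup fun i => a + f i :=
  Finset.apply_sup_eq_sup_comp (a + ·) (fun _ _ => (add_right_mono).map_max) (WithBot.add_bot a)

lemma finset_sup_add {ι : Type*} (s : Finset ι) (a : WithBot ℕ) (f : ι → WithBot ℕ) :
    s.sup f + a = s.sup fun i => f i + a :=
  Finset.apply_sup_eq_sup_comp (· + a) (fun _ _ => (add_left_mono).map_max) (WithBot.bot_add a)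

lemma nsmul_natCast (s c : ℕ) : s • (c : WithBot ℕ) = (s * c : ℕ) := by
  simp

lemma nsmul_bot_add_le (s x : ℕ) : s • (⊥ : WithBot ℕ) + s ≤ x := by
  cases s with
  | zero => simp
  | succ s => rw [succ_nsmul, WithBot.add_bot, WithBot.bot_add]; exact bot_le

lemma le_div_of_nsmul_add_le {s x : ℕ} {a : WithBot ℕ} (h : (s + 1) • a + (s + 1 : ℕ) ≤ x) :
    a ≤ ((x - 1) / (s + 1) : ℕ) := by
  cases a with
  | bot => exact bot_le
  | coe v =>
    rw [← Nat.cast_withBot, nsmul_natCast, ← Nat.cast_add, Nat.cast_le] at h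
    rw [← Nat.cast_withBot, Nat.cast_le, Nat.le_div_iff_mul_le (by omega), mul_comm]
    omega

lemma nsmul_add_add_le {s W x y : ℕ} {a b : WithBot ℕ} (ha : a ≠ ⊥) (hb : b ≠ ⊥)
    (hax : (s * (W + 1)) • a + (s * (W + 1) : ℕ) ≤ x) (hbW : b ≤ W) :
    s • (a + b) + s ≤ (x + y : ℕ) := by
  lift a to ℕ using ha
  lift b to ℕ using hb
  rw [← Nat.cast_withBot, nsmul_natCast, ← Nat.cast_add, Nat.cast_le] at hax
  rw [← Nat.cast_withBot, Nat.cast_le] at hbW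
  rw [← Nat.cast_withBot, ← Nat.cast_withBot, ← Nat.cast_add, nsmul_natCast, ← Nat.cast_add,
    Nat.cast_le]
  have ha : s * a ≤ s * (W + 1) * a :=
    Nat.mul_le_mul_right a (Nat.le_mul_of_pos_right s (by omega))
  have hb : s * b ≤ s * W := Nat.mul_le_mul_left s hbW
  nlinarith

end WithBot

namespace MPA

variable {Sigma Q : Type} [Fintype Q] [DecidableEq Q] {A : MPA Sigma Q}

lemma mword_nil (p q : Q) : A.mword [] p q = if p = q then 0 else ⊥ := rfl

lemma mword_singleton (a : Sigma) (p q : Q) : A.mword [a] p q = A.M a p q := by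
  simp [mword, add_ite, Finset.sup_ite, Finset.filter_eq']

lemma mword_append (u v : List Sigma) (p q : Q) :
    A.mword (u ++ v) p q = Finset.univ.sup fun r => A.mword u p r + A.mword v r q := by
  induction u generalizing p with
  | nil => simp [mword, ite_add, Finset.sup_ite, Finset.filter_eq]
  | cons a u ih =>
    simp only [List.cons_append, mword, ih, WithBot.add_finset_sup, WithBot.finset_sup_add,
      add_assoc]
    exact Finset.sup_comm _ _ _

lemma exists_of_mword_cons_ne_bot {a : Sigma} {w : List Sigma} {p q : Q}
    (h : A.mword (a :: w) p q ≠ ⊥) : ∃ t, A.M a p t ≠ ⊥ ∧ A.mword w t q ≠ ⊥ := by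
  simpa [mword, Finset.sup_eq_bot_iff, WithBot.add_eq_bot, not_or] using h

lemma Deterministic.eq_of_mword_ne_bot (hdet : A.Deterministic) {w : List Sigma} {p q r : Q}
    (hq : A.mword w p q ≠ ⊥) (hr : A.mword w p r ≠ ⊥) : q = r := by
  induction w generalizing p with
  | nil =>
    simp only [mword_nil, ne_eq, ite_eq_right_iff, not_forall] at hq hr
    exact hq.1.symm.trans hr.1
  | cons a w ih =>
    obtain ⟨t, hpt, htq⟩ := exists_of_mword_cons_ne_bot hq
    obtain ⟨t', hpt', ht'r⟩ := exists_of_mword_cons_ne_bot hr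
    obtain rfl := hdet.2 a p t t' hpt hpt'
    exact ih htq ht'r

lemma Deterministic.mword_append (hdet : A.Deterministic) {u : List Sigma} {p q : Q} {x : ℕ}
    (hu : A.mword u p q = x) (v : List Sigma) (r : Q) :
    A.mword (u ++ v) p r = x + A.mword v q r := by
  rw [MPA.mword_append]
  refine le_antisymm (Finset.sup_le fun t _ => ?_)
    (hu ▸ Finset.le_sup (f := fun t => A.mword u p t + A.mword v t r) (Finset.mem_univ q))
  by_cases ht : A.mword u p t = ⊥
  · simp [ht]
  · obtain rfl := hdet.eq_of_mword_ne_bot ht (hu ▸ WithBot.natCast_ne_bot x)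
    rw [hu]

lemma Deterministic.mword_pow (hdet : A.Deterministic) {w : List Sigma} {p : Q} {x : ℕ}
    (hw : A.mword w p p = x) (m : ℕ) :
    A.mword (List.replicate m w).flatten p p = (m * x : ℕ) := by
  induction m with
  | zero => simp [mword_nil]
  | succ m ih =>
    rw [List.replicate_succ, List.flatten_cons, hdet.mword_append hw, ih]
    push_cast
    ring

end MPA

section Matrix

variable {n : ℕ}

lemma le_omul (M N : Fin n → Fin n → OSR) (i j k : Fin n) :
    OSR.add (M i k) (N k j) ≤ omul M N i j :=
  le_osum (fun k => OSR.add (M i k) (N k j)) k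

lemma obar_omul (M N : Fin n → Fin n → OSR) : obar (omul M N) = omul (obar M) (obar N) := by
  ext i j
  simp only [obar, omul, bar_osum, OSR.bar_add]

lemma obar_obar (M : Fin n → Fin n → OSR) : obar (obar M) = obar M := by
  ext i j
  exact OSR.bar_bar _

lemma obar_mstab {M : Fin n → Fin n → OSR} (hidem : omul (obar M) (obar M) = obar M) :
    obar (mstab M) = obar M := by
  have hdiag : obar (mdiagSharp M) = obar M := by
    ext i j
    simp only [obar, mdiagSharp]
    split_ifs <;> simp [OSR.bar_sharp]
  simp only [mstab, obar_omul, hdiag, hidem]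

lemma obar_mflat {M : Fin n → Fin n → OSR} (hidem : omul (obar M) (obar M) = obar M) :
    obar (mflat M) = obar M := by
  have hangle : ∀ N : Fin n → Fin n → OSR, obar (mangle N) = obar N := by
    intro N
    ext i j
    simp only [obar, mangle]
    split_ifs <;> simp [OSR.bar_bar]
  simp only [mflat, obar_omul, hangle, obar_obar, hidem]

lemma omul_eq_inf_of_left {n : ℕ} {M N : Fin n → Fin n → OSR} {i j k : Fin n}
    (hM : M i k = OSR.inf) (hN : N k j ≠ OSR.bot) : omul M N i j = OSR.inf :=
  osum_eq_inf (i := k) (by rw [hM]; exact OSR.inf_add hN)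

lemma omul_eq_inf_of_right {n : ℕ} {M N : Fin n → Fin n → OSR} {i j k : Fin n}
    (hM : M i k ≠ OSR.bot) (hN : N k j = OSR.inf) : omul M N i j = OSR.inf :=
  osum_eq_inf (i := k) (by rw [hN]; exact OSR.add_inf hM)

variable {QA : Type} {e : Elem QA n}

lemma ebar_estab (he : pathIdem e) : ebar (estab e) = ebar e := by
  simp [ebar, estab, OSR.bar_sharp, obar_mstab he.2, he.1]

lemma ebar_eflat (he : pathIdem e) : ebar (eflat e) = ebar e := by
  simp [ebar, eflat, obar_mflat he.2, he.1]

end Matrix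

namespace MPA

variable {Sigma : Type} {n : ℕ} (B : MPA Sigma (Fin n))

def barMword (w : List Sigma) : Fin n → Fin n → OSR :=
  fun i j => barW (B.mword w i j)

lemma barMword_singleton (a : Sigma) : B.barMword [a] = fun i j => barW (B.M a i j) := by
  ext i j
  simp [barMword, mword_singleton]

lemma barMword_append (u v : List Sigma) :
    B.barMword (u ++ v) = omul (B.barMword u) (B.barMword v) := by
  ext i j
  simp only [barMword, mword_append, barW_sup, barW_add, omul]

lemma barMword_pow {w : List Sigma} {P : Fin n → Fin n → OSR} (hw : B.barMword w = P)
    (hP : omul P P = P) {m : ℕ} (hm : 1 ≤ m) :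
    B.barMword (List.replicate m w).flatten = P := by
  induction m, hm using Nat.le_induction with
  | base => simpa using hw
  | succ m _ ih => rw [List.replicate_succ, List.flatten_cons, barMword_append, hw, ih, hP]

end MPA

section Reach

variable {n : ℕ} {M : Fin n → Fin n → OSR}

def Reaches (M : Fin n → Fin n → OSR) (a b : Fin n) : Prop :=
  a = b ∨ M a b ≠ OSR.bot

def Relevant (M : Fin n → Fin n → OSR) (i j k : Fin n) : Prop :=
  Reaches M i k ∧ Reaches M k j

noncomputable def reachCard (M : Fin n → Fin n → OSR) (i : Fin n) : ℕ :=
  (Finset.univ.filter (Reaches M i)).card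

lemma ne_bot_trans (hidem : omul (obar M) (obar M) = obar M) {a b c : Fin n}
    (hab : M a b ≠ OSR.bot) (hbc : M b c ≠ OSR.bot) : M a c ≠ OSR.bot := by
  rw [← OSR.bar_ne_bot]
  change obar M a c ≠ OSR.bot
  rw [← hidem]
  exact osum_ne_bot (i := b) (OSR.add_ne_bot (OSR.bar_ne_bot.2 hab) (OSR.bar_ne_bot.2 hbc))

lemma Reaches.trans (hidem : omul (obar M) (obar M) = obar M) {a b c : Fin n}
    (hab : Reaches M a b) (hbc : Reaches M b c) : Reaches M a c := by
  rcases hab with rfl | hab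
  · exact hbc
  rcases hbc with rfl | hbc
  · exact Or.inr hab
  exact Or.inr (ne_bot_trans hidem hab hbc)

lemma Relevant.ne_bot {i j k : Fin n} (hk : Relevant M i j k) (hkk : M k k ≠ OSR.bot) :
    M i k ≠ OSR.bot ∧ M k j ≠ OSR.bot := by
  obtain ⟨rfl | hik, rfl | hkj⟩ := hk <;> simp_all

lemma reachCard_le (M : Fin n → Fin n → OSR) (i : Fin n) : reachCard M i ≤ n :=
  (Finset.card_filter_le _ _).trans (Finset.card_fin n).le

lemma reachCard_le_of_reaches (hidem : omul (obar M) (obar M) = obar M) {i l : Fin n}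
    (hil : Reaches M i l) : reachCard M l ≤ reachCard M i := by
  refine Finset.card_le_card fun u hu => ?_
  simp only [Finset.mem_filter, Finset.mem_univ, true_and] at hu ⊢
  exact hil.trans hidem hu

lemma reachCard_lt (hidem : omul (obar M) (obar M) = obar M) {i l : Fin n}
    (hil : Reaches M i l) (hli : ¬Reaches M l i) : reachCard M l < reachCard M i := by
  refine Finset.card_lt_card ⟨fun u hu => ?_, fun h => hli ?_⟩
  · simp only [Finset.mem_filter, Finset.mem_univ, true_and] at hu ⊢
    exact hil.trans hidem hu
  · simpa using h (Finset.mem_filter.2 ⟨Finset.mem_univ i, Or.inl rfl⟩)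

end Reach

section Cycles

variable {n : ℕ} {M : Fin n → Fin n → OSR}

lemma not_reaches_of_mstab_le_one (hidem : omul (obar M) (obar M) = obar M) {i j k l : Fin n}
    (hij : mstab M i j ≤ OSR.one) (hk : Relevant M i j k) (hkl0 : M k l ≠ OSR.zero)
    (hkl : M k l ≠ OSR.bot) : ¬Reaches M l k := by
  intro hlk
  replace hlk : M l k ≠ OSR.bot := by rcases hlk with rfl | hlk <;> assumption
  have hkk : M k k ≠ OSR.bot := ne_bot_trans hidem hkl hlk
  have hsharp : (M k k).sharp = OSR.inf := by
    refine OSR.sharp_eq_inf_of_one_le_bar ((OSR.one_le_add_bar hkl hkl0 hlk).trans ?_)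
    change _ ≤ obar M k k
    rw [← hidem]
    exact le_omul (obar M) (obar M) k k l
  obtain ⟨hik, hkj⟩ := hk.ne_bot hkk
  have hD : omul M (mdiagSharp M) i k = OSR.inf :=
    omul_eq_inf_of_right hik (by simpa [mdiagSharp] using hsharp)
  have : mstab M i j = OSR.inf := omul_eq_inf_of_left hD hkj
  exact absurd (this ▸ hij) (by decide)

lemma not_reaches_of_mflat_le_one (hidem : omul (obar M) (obar M) = obar M) {i j k l : Fin n}
    (hij : mflat M i j ≤ OSR.one) (hk : Relevant M i j k) (hkl : M k l = OSR.inf) :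
    ¬Reaches M l k := by
  intro hlk
  replace hlk : M l k ≠ OSR.bot := by rcases hlk with rfl | hlk <;> simp [*]
  have hkk : M k k ≠ OSR.bot := ne_bot_trans hidem (by simp [hkl]) hlk
  obtain ⟨hik, hkj⟩ := hk.ne_bot hkk
  have hM3 : omul M (omul M M) k k = OSR.inf :=
    omul_eq_inf_of_left hkl (osum_ne_bot (i := k) (OSR.add_ne_bot hlk hkk))
  have hR : omul (mangle (omul M (omul M M))) (obar M) k j = OSR.inf :=
    omul_eq_inf_of_left (by simpa [mangle] using hM3) (OSR.bar_ne_bot.2 hkj)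
  have : mflat M i j = OSR.inf := omul_eq_inf_of_right (OSR.bar_ne_bot.2 hik) hR
  exact absurd (this ▸ hij) (by decide)

end Cycles

def maxEntry {n : ℕ} (N : Fin n → Fin n → WithBot ℕ) : ℕ :=
  Finset.univ.sup fun kl : Fin n × Fin n => (N kl.1 kl.2).unbotD 0

lemma le_maxEntry {n : ℕ} (N : Fin n → Fin n → WithBot ℕ) (k l : Fin n) :
    N k l ≤ maxEntry N := by
  refine (WithBot.le_coe_unbotD _ 0).trans ?_
  rw [← Nat.cast_withBot, Nat.cast_le]
  exact Finset.le_sup (f := fun kl : Fin n × Fin n => (N kl.1 kl.2).unbotD 0)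
    (Finset.mem_univ (k, l))

namespace MPA

variable {Sigma : Type} {n : ℕ} {B : MPA Sigma (Fin n)} {w : List Sigma}
  {M : Fin n → Fin n → OSR}

lemma mword_ne_bot_iff (hbar : B.barMword w = obar M) {k l : Fin n} :
    B.mword w k l ≠ ⊥ ↔ M k l ≠ OSR.bot := by
  have h : barW (B.mword w k l) = (M k l).bar := congrFun (congrFun hbar k) l
  rw [← barW_ne_bot, h, OSR.bar_ne_bot]

lemma reaches_of_mword_pow_ne_bot (hidem : omul (obar M) (obar M) = obar M)
    (hbar : B.barMword w = obar M) {m : ℕ} {l j : Fin n}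
    (h : B.mword (List.replicate m w).flatten l j ≠ ⊥) : Reaches M l j := by
  rcases Nat.eq_zero_or_pos m with rfl | hm
  · simp only [List.replicate_zero, List.flatten_nil, mword_nil, ne_eq, ite_eq_right_iff,
      not_forall] at h
    exact Or.inl h.1
  · exact Or.inr ((mword_ne_bot_iff (B.barMword_pow hbar hidem hm)).1 h)

theorem mword_pow_le (hidem : omul (obar M) (obar M) = obar M) (hbar : B.barMword w = obar M)
    (cheap : Fin n → Fin n → Prop) {V W : ℕ}
    (hV : ∀ k l, cheap k l → B.mword w k l ≤ V) (hW : ∀ k l, B.mword w k l ≤ W) {i₀ j₀ : Fin n}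
    (hexp : ∀ k l, Relevant M i₀ j₀ k → ¬cheap k l → M k l ≠ OSR.bot → ¬Reaches M l k)
    (m : ℕ) {i : Fin n} (hi : Reaches M i₀ i) :
    B.mword (List.replicate m w).flatten i j₀ ≤ (reachCard M i * W + m * V : ℕ) := by
  -- `reachCard M` drops strictly along each expensive transition of a run and never increases.
  induction m generalizing i with
  | zero =>
    simp only [List.replicate_zero, List.flatten_nil, mword_nil]
    split_ifs
    · exact_mod_cast Nat.zero_le _
    · exact bot_le
  | succ m ih =>
    rw [List.replicate_succ, List.flatten_cons, mword_append]
    refine Finset.sup_le fun l _ => ?_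
    by_cases hbot : B.mword w i l + B.mword (List.replicate m w).flatten l j₀ = ⊥
    · simp [hbot]
    obtain ⟨hil, hlj⟩ := WithBot.add_ne_bot.1 hbot
    have hil : Reaches M i l := Or.inr ((mword_ne_bot_iff hbar).1 hil)
    have hlj : Reaches M l j₀ := reaches_of_mword_pow_ne_bot hidem hbar hlj
    have ih := ih (hi.trans hidem hil)
    by_cases hc : cheap i l
    · have := reachCard_le_of_reaches hidem hil
      calc _ ≤ (V : WithBot ℕ) + (reachCard M l * W + m * V : ℕ) := add_le_add (hV i l hc) ih
        _ ≤ _ := by exact_mod_cast (by nlinarith)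
    · have hli := hexp i l ⟨hi, hil.trans hidem hlj⟩ hc
        ((mword_ne_bot_iff hbar).1 (WithBot.add_ne_bot.1 hbot).1)
      have := reachCard_lt hidem hil hli
      calc _ ≤ (W : WithBot ℕ) + (reachCard M l * W + m * V : ℕ) := add_le_add (hW i l) ih
        _ ≤ _ := by exact_mod_cast (by nlinarith)

theorem nsmul_mword_pow_add_le (hidem : omul (obar M) (obar M) = obar M)
    (hbar : B.barMword w = obar M) (cheap : Fin n → Fin n → Prop) {V x s : ℕ}
    (hV : ∀ k l, cheap k l → B.mword w k l ≤ V) (hx : 1 + s * V ≤ x) {i j : Fin n}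
    (hexp : ∀ k l, Relevant M i j k → ¬cheap k l → M k l ≠ OSR.bot → ¬Reaches M l k)
    {m : ℕ} (hm : s * (n * maxEntry (B.mword w) + 1) ≤ m) :
    s • B.mword (List.replicate m w).flatten i j + s ≤ (m * x : ℕ) := by
  set W := maxEntry (B.mword w)
  have hbound := mword_pow_le hidem hbar cheap hV (le_maxEntry _) hexp m (Or.inl rfl)
  have hρ := reachCard_le M i
  have key : s * (reachCard M i * W + m * V) + s ≤ m * x := by
    have : s * (reachCard M i * W) ≤ s * (n * W) := by gcongr
    nlinarith
  calc _ ≤ s • ((reachCard M i * W + m * V : ℕ) : WithBot ℕ) + s := by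
        gcongr
    _ ≤ _ := by rw [WithBot.nsmul_natCast]; exact_mod_cast key

end MPA

lemma eq_eprod_of_omulO_eq_some {QA : Type} {n : ℕ} [DecidableEq QA]
    {x y : Option (Elem QA n)} {e : Elem QA n} (h : omulO x y = some e) :
    ∃ e₁ e₂, x = some e₁ ∧ y = some e₂ ∧ e₁.q = e₂.p ∧ e = eprod e₁ e₂ := by
  match x, y, h with
  | some e₁, some e₂, h =>
    simp only [omulO] at h
    split_ifs at h with hq
    exact ⟨e₁, e₂, rfl, rfl, hq, (Option.some.inj h).symm⟩

section Realizability

variable {Sigma QA : Type} [Fintype QA] [DecidableEq QA] {nB : ℕ}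
  (A : MPA Sigma QA) (B : MPA Sigma (Fin nB))

def Realizes (e : Elem QA nB) (ws : List Sigma) (xs : ℕ) : Prop :=
  A.mword ws e.p e.q = xs ∧ barNat xs = e.x.bar ∧ B.barMword ws = obar e.M

def Separates (s : ℕ) (e : Elem QA nB) (ws : List Sigma) (xs : ℕ) : Prop :=
  e.x = OSR.inf → ∀ i j, e.M i j ≤ OSR.one → s • B.mword ws i j + s ≤ xs

def Realizable (e : Elem QA nB) : Prop :=
  ∀ s, ∃ ws xs, Realizes A B e ws xs ∧ Separates B s e ws xs

variable {A B} {e e₁ e₂ : Elem QA nB} {w w₁ w₂ : List Sigma} {x x₁ x₂ : ℕ}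

lemma Realizes.of_ebar_eq {e' : Elem QA nB} (h : Realizes A B e w x) (he : ebar e' = ebar e) :
    Realizes A B e' w x := by
  simp only [ebar, Elem.mk.injEq] at he
  obtain ⟨hp, hx, hq, hM⟩ := he
  exact ⟨hp ▸ hq ▸ h.1, hx ▸ h.2.1, hM ▸ h.2.2⟩

lemma Realizes.pow (hdet : A.Deterministic) (he : pathIdem e) (h : Realizes A B e w x) {m : ℕ}
    (hm : 1 ≤ m) : Realizes A B e (List.replicate m w).flatten (m * x) := by
  refine ⟨?_, (barNat_mul hm x).trans h.2.1, B.barMword_pow h.2.2 he.2 hm⟩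
  have hw := h.1
  rw [← he.1] at hw ⊢
  exact hdet.mword_pow hw m

lemma Realizes.eprod (hdet : A.Deterministic) (h₁ : Realizes A B e₁ w₁ x₁)
    (h₂ : Realizes A B e₂ w₂ x₂) (hq : e₁.q = e₂.p) :
    Realizes A B (eprod e₁ e₂) (w₁ ++ w₂) (x₁ + x₂) := by
  refine ⟨?_, ?_, ?_⟩
  · rw [_root_.eprod, hdet.mword_append h₁.1, hq, h₂.1]
    push_cast
    rfl
  · rw [_root_.eprod, barNat_add, OSR.bar_add, h₁.2.1, h₂.2.1]
  · rw [_root_.eprod, MPA.barMword_append, h₁.2.2, h₂.2.2, obar_omul]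

lemma separates_eprod {s : ℕ} (h₁ : Realizes A B e₁ w₁ x₁) (h₂ : Realizes A B e₂ w₂ x₂)
    (h : ∀ i k j, e₁.M i k ≤ OSR.one → e₂.M k j ≤ OSR.one → B.mword w₁ i k ≠ ⊥ →
      B.mword w₂ k j ≠ ⊥ → s • (B.mword w₁ i k + B.mword w₂ k j) + s ≤ (x₁ + x₂ : ℕ)) :
    Separates B s (eprod e₁ e₂) (w₁ ++ w₂) (x₁ + x₂) := by
  intro _ i j hij
  obtain ⟨k, -, hk⟩ := Finset.exists_mem_eq_sup Finset.univ ⟨i, Finset.mem_univ i⟩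
    fun k => B.mword w₁ i k + B.mword w₂ k j
  rw [MPA.mword_append, hk]
  by_cases hbot : B.mword w₁ i k + B.mword w₂ k j = ⊥
  · rw [hbot]
    exact WithBot.nsmul_bot_add_le s _
  obtain ⟨hik, hkj⟩ := WithBot.add_ne_bot.1 hbot
  obtain ⟨hle₁, hle₂⟩ := OSR.le_one_of_add_le_one ((le_omul e₁.M e₂.M i j k).trans hij)
    ((MPA.mword_ne_bot_iff h₁.2.2).1 hik) ((MPA.mword_ne_bot_iff h₂.2.2).1 hkj)
  exact h i k j hle₁ hle₂ hik hkj

lemma realizable_of_isGen (h : IsGen A B e) : Realizable A B e := by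
  obtain ⟨a, p, q, x, hx, rfl⟩ := h
  refine fun _ => ⟨[a], x, ⟨?_, (bar_barNat x).symm, ?_⟩, fun h => absurd h (barNat_ne_inf x)⟩
  · rw [MPA.mword_singleton, hx]
  · ext i j
    simp [MPA.barMword_singleton, obar, bar_barW]

lemma realizable_eprod (hdet : A.Deterministic) (h₁ : Realizable A B e₁)
    (h₂ : Realizable A B e₂) (hq : e₁.q = e₂.p) : Realizable A B (eprod e₁ e₂) := by
  intro s
  -- The factor of weight `∞` is realised for a larger `s`, absorbing the weights of the other word.
  by_cases hx₁ : e₁.x = OSR.inf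
  · obtain ⟨w₂, x₂, hr₂, -⟩ := h₂ s
    obtain ⟨w₁, x₁, hr₁, hs₁⟩ := h₁ (s * (maxEntry (B.mword w₂) + 1))
    refine ⟨w₁ ++ w₂, x₁ + x₂, hr₁.eprod hdet hr₂ hq, separates_eprod hr₁ hr₂ ?_⟩
    intro i k j hik _ hik' hkj'
    exact WithBot.nsmul_add_add_le hik' hkj' (hs₁ hx₁ i k hik) (le_maxEntry _ k j)
  by_cases hx₂ : e₂.x = OSR.inf
  · obtain ⟨w₁, x₁, hr₁, -⟩ := h₁ s
    obtain ⟨w₂, x₂, hr₂, hs₂⟩ := h₂ (s * (maxEntry (B.mword w₁) + 1))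
    refine ⟨w₁ ++ w₂, x₁ + x₂, hr₁.eprod hdet hr₂ hq, separates_eprod hr₁ hr₂ ?_⟩
    intro i k j _ hkj hik' hkj'
    rw [add_comm (B.mword w₁ i k), add_comm x₁]
    exact WithBot.nsmul_add_add_le hkj' hik' (hs₂ hx₂ k j hkj) (le_maxEntry _ i k)
  obtain ⟨w₁, x₁, hr₁, -⟩ := h₁ s
  obtain ⟨w₂, x₂, hr₂, -⟩ := h₂ s
  refine ⟨w₁ ++ w₂, x₁ + x₂, hr₁.eprod hdet hr₂ hq, fun hx => ?_⟩
  exact (OSR.add_eq_inf hx).elim (absurd · hx₁) (absurd · hx₂)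

lemma realizable_estab (hdet : A.Deterministic) (he : pathIdem e) (h : Realizable A B e) :
    Realizable A B (estab e) := by
  intro s
  obtain ⟨w, x, hr, -⟩ := h s
  let m := s * (nB * maxEntry (B.mword w) + 1) + 1
  refine ⟨_, m * x, (hr.pow hdet he (by omega)).of_ebar_eq (ebar_estab he), fun hx i j hij => ?_⟩
  have hx1 : 1 ≤ x := one_le_of_barNat_eq_one (hr.2.1.trans (OSR.bar_eq_one_of_sharp_eq_inf hx))
  refine MPA.nsmul_mword_pow_add_le he.2 hr.2.2 (fun k l => e.M k l = OSR.zero) (V := 0)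
    (fun k l hkl => ?_) (by omega)
    (fun k l hk hkl0 hkl => not_reaches_of_mstab_le_one he.2 hij hk hkl0 hkl) (by omega)
  have : barW (B.mword w k l) = (e.M k l).bar := congrFun (congrFun hr.2.2 k) l
  rw [hkl] at this
  exact (barW_eq_zero this).le

lemma realizable_eflat (hdet : A.Deterministic) (he : pathIdem e) (h : Realizable A B e) :
    Realizable A B (eflat e) := by
  intro s
  -- `s + 1` rather than `s`, so that the entries `M_B(w)_{kl}` with `M_{kl} ≤ 1` are bounded
  -- even when `s = 0`.
  obtain ⟨w, x, hr, hsep⟩ := h (s + 1)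
  let m := s * (nB * maxEntry (B.mword w) + 1) + 1
  refine ⟨_, m * x, (hr.pow hdet he (by omega)).of_ebar_eq (ebar_eflat he), fun hx i j hij => ?_⟩
  have hx1 : 1 ≤ x :=
    one_le_of_barNat_eq_one (hr.2.1.trans (by rw [show e.x = OSR.inf from hx]; rfl))
  have hV : 1 + s * ((x - 1) / (s + 1)) ≤ x := by
    have := Nat.div_mul_le_self (x - 1) (s + 1)
    have : s * ((x - 1) / (s + 1)) ≤ (x - 1) / (s + 1) * (s + 1) := by
      rw [mul_comm]; exact Nat.mul_le_mul_left _ (Nat.le_succ s)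
    omega
  refine MPA.nsmul_mword_pow_add_le he.2 hr.2.2 (fun k l => e.M k l ≤ OSR.one)
    (fun k l hkl => WithBot.le_div_of_nsmul_add_le (hsep hx k l hkl)) hV
    (fun k l hk hkl _ => not_reaches_of_mflat_le_one he.2 hij hk (OSR.eq_inf_of_not_le_one hkl))
    (by omega)

theorem realizable_of_inAsympO (hdet : A.Deterministic) {o : Option (Elem QA nB)}
    (ho : InAsympO A B o) : ∀ e ∈ o, Realizable A B e := by
  induction ho with
  | gen e he => rintro _ ⟨⟩; exact realizable_of_isGen he
  | mul x y _ _ ihx ihy =>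
    intro e he
    obtain ⟨e₁, e₂, rfl, rfl, hq, rfl⟩ := eq_eprod_of_omulO_eq_some he
    exact realizable_eprod hdet (ihx e₁ rfl) (ihy e₂ rfl) hq
  | stab e _ he ih => rintro _ ⟨⟩; exact realizable_estab hdet he (ih e rfl)
  | flat e _ he ih => rintro _ ⟨⟩; exact realizable_eflat hdet he (ih e rfl)

end Realizability

/-- for every element `(p,x,q,M)` of `I_{A,B}` and every `s ∈ ℕ` there are a word
`w_s` and `x_s ∈ ℕ` such that (1) `A` has a run from `p` to `q` on `w_s` of weight `x_s` with
`bar x = bar x_s`; (2) `bar(M_B(w_s)) = bar M`; (3) if `x = ∞` then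
`x_s ≥ s·(M_B(w_s))_{i,j} + s` whenever `M_{i,j} ≤ 1`. -/
theorem words_construct {Sigma QA : Type} [Fintype Sigma] [Fintype QA] [DecidableEq QA]
    {nB : ℕ} (A : MPA Sigma QA) (B : MPA Sigma (Fin nB))
    (hdet : A.Deterministic) (hB : ∀ v : List Sigma, B.func v ≠ ⊥) :
    ∀ e : Elem QA nB, InAsympO A B (some e) → ∀ s : ℕ,
      ∃ (ws : List Sigma) (xs : ℕ),
        A.mword ws e.p e.q = ((xs : ℕ) : WithBot ℕ) ∧
        barNat xs = (Elem.x e).bar ∧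
        (∀ i j : Fin nB, barW (B.mword ws i j) = (e.M i j).bar) ∧
        (e.x = OSR.inf → ∀ i j : Fin nB, e.M i j ≤ OSR.one →
          s • B.mword ws i j + ((s : ℕ) : WithBot ℕ) ≤ ((xs : ℕ) : WithBot ℕ)) := by
  intro e he s
  obtain ⟨ws, xs, ⟨hrun, hx, hM⟩, hsep⟩ := realizable_of_inAsympO hdet he e rfl s
  exact ⟨ws, xs, hrun, hx, fun i j => congrFun (congrFun hM i) j, hsep⟩
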